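/- arXiv:1909.12615 — 7 statements merged into one kernel-verified Lean document; each statement's English description precedes it below -/
import Mathlib

section
/- Let f: R → S be a bijective homomorphism of separation systems. If R is nested and S is regular (contains no small elements), then f is an isomorphism of separation systems, i.e., f⁻¹ is also order-preserving; moreover both R and S are regular tree sets. -/
/-- A map `i` is the involution of a separation system on a poset:
it is self-inverse and order-reversing. -/
def IsInvolution {α : Type*} [PartialOrder α] (i : α → α) : Prop :=
  (∀ s, i (i s) = s) ∧ ∀ r s : α, r ≤ s → i s ≤ i r

/-- An oriented separation is small if it lies below its inverse. -/
def IsSmall {α : Type*} [PartialOrder α] (i : α → α) (s : α) : Prop := s ≤ i s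

/-- Two separations are nested: some orientations are comparable. -/
def IsNestedPair {α : Type*} [PartialOrder α] (i : α → α) (r s : α) : Prop :=
  r ≤ s ∨ r ≤ i s ∨ i r ≤ s ∨ i r ≤ i s

/-- `r` is trivial: `r ≤ s` and `r ≤ s*` for some `s` distinct from `r`
as an unoriented separation. -/
def IsTrivialSep {α : Type*} [PartialOrder α] (i : α → α) (r : α) : Prop :=
  ∃ s, r ≤ s ∧ r ≤ i s ∧ r ≠ s ∧ r ≠ i s

/-- A tree set: nested, no trivial and no degenerate elements. -/
def IsTreeSet {α : Type*} [PartialOrder α] (i : α → α) : Prop :=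
  (∀ r s : α, IsNestedPair i r s) ∧ (∀ r : α, ¬ IsTrivialSep i r) ∧ ∀ s : α, s ≠ i s

/-- An orientation contains exactly one of `s`, `s*` for each separation. -/
def IsOrientation {α : Type*} [PartialOrder α] (i : α → α) (O : Set α) : Prop :=
  ∀ s : α, s ∈ O ↔ i s ∉ O

/-- A consistent orientation contains no two separations with distinct underlying
separations that point away from each other. -/
def IsConsistentOrientation {α : Type*} [PartialOrder α] (i : α → α) (O : Set α) : Prop :=
  ∀ r ∈ O, ∀ s ∈ O, r ≠ s → r ≠ i s → ¬ i r ≤ s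

/-- `m` is a maximal element of `O`. -/
def MaximalIn {α : Type*} [PartialOrder α] (O : Set α) (m : α) : Prop :=
  m ∈ O ∧ ∀ t ∈ O, m ≤ t → m = t

/-- `O` splits: every element lies below a maximal element of `O`. -/
def SplitsAt {α : Type*} [PartialOrder α] (O : Set α) : Prop :=
  ∀ s ∈ O, ∃ m, MaximalIn O m ∧ s ≤ m

/-- A splitting star: the set of maximal elements of a splitting consistent
orientation. -/
def IsSplittingStar {α : Type*} [PartialOrder α] (i : α → α) (σ : Set α) : Prop :=
  ∃ O : Set α, IsOrientation i O ∧ IsConsistentOrientation i O ∧ SplitsAt O ∧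
    σ = {m | MaximalIn O m}

/-- A star of oriented separations. -/
def IsSepStar {α : Type*} [PartialOrder α] (i : α → α) (σ : Set α) : Prop :=
  ∀ x ∈ σ, ∀ y ∈ σ, x ≠ y → x ≤ i y

/-- A selection: a non-empty finite set meeting no splitting star in exactly
one element. -/
def IsSelection {α : Type*} [PartialOrder α] (i : α → α) (D : Set α) : Prop :=
  D.Finite ∧ D.Nonempty ∧
    ∀ σ : Set α, IsSplittingStar i σ → ¬ ∃ x, σ ∩ D = {x}

/-- `D⁺(s)`: the elements of `D` strictly below `s` (distinct from `s` as
unoriented separations). -/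
def Dplus {α : Type*} [PartialOrder α] (i : α → α) (D : Set α) (s : α) : Set α :=
  {d ∈ D | d ≤ s ∧ d ≠ s ∧ d ≠ i s}

/-- `D⁻(s) = D⁺(s*)`. -/
def Dminus {α : Type*} [PartialOrder α] (i : α → α) (D : Set α) (s : α) : Set α :=
  Dplus i D (i s)

/-- `D`-equivalence. -/
def DEquiv {α : Type*} [PartialOrder α] (i : α → α) (D : Set α) (r s : α) : Prop :=
  Dplus i D r = Dplus i D s ∧ Dminus i D r = Dminus i D s

/-- The order induced on `D`-equivalence classes, stated on representatives. -/
def QLe {α : Type*} [PartialOrder α] (i : α → α) (D : Set α) (r s : α) : Prop :=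
  ∃ r' s', DEquiv i D r r' ∧ DEquiv i D s s' ∧ r' ≤ s'

/-- A branching point: an element of a splitting star of size at least three. -/
def IsBranchingPoint {α : Type*} [PartialOrder α] (i : α → α) (b : α) : Prop :=
  ∃ σ : Set α, IsSplittingStar i σ ∧ b ∈ σ ∧
    ∃ x ∈ σ, ∃ y ∈ σ, x ≠ y ∧ x ≠ b ∧ y ≠ b

/-- A selection is branch-closed if it contains every branching point lying
between two of its elements. -/
def BranchClosed {α : Type*} [PartialOrder α] (i : α → α) (D : Set α) : Prop :=
  ∀ b, IsBranchingPoint i b →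
    (∃ d₁ ∈ D, ∃ d₂ ∈ D, d₁ ≤ b ∧ b ≤ i d₂) → b ∈ D

/-- Every non-empty chain has a supremum. -/
def SepChainComplete (α : Type*) [PartialOrder α] : Prop :=
  ∀ C : Set α, C.Nonempty → IsChain (· ≤ ·) C → ∃ m, IsLUB C m

/-- The quotient `τ/D`, described via representatives, is a tree set:
the induced relation is a partial order, the quotient is nested, and it has
no trivial and no degenerate elements. -/
def QuotientIsTreeSet {α : Type*} [PartialOrder α] (i : α → α) (D : Set α) : Prop :=
  (∀ x y : α, QLe i D x y → QLe i D y x → DEquiv i D x y) ∧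
  (∀ x y z : α, QLe i D x y → QLe i D y z → QLe i D x z) ∧
  (∀ x y : α, QLe i D x y ∨ QLe i D x (i y) ∨ QLe i D (i x) y ∨ QLe i D (i x) (i y)) ∧
  (∀ r : α, ¬ ∃ s, QLe i D r s ∧ QLe i D r (i s) ∧ ¬ DEquiv i D r s ∧ ¬ DEquiv i D r (i s)) ∧
  (∀ s : α, ¬ DEquiv i D s (i s))

/-- a bijective homomorphism from a nested separation system
to a regular one is an isomorphism, and both systems are regular tree sets. -/
theorem stmt_2 {R S : Type*} [PartialOrder R] [PartialOrder S]
    (iR : R → R) (iS : S → S)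
    (hiR : IsInvolution iR) (hiS : IsInvolution iS)
    (f : R → S)
    (hfc : ∀ r : R, f (iR r) = iS (f r))
    (hfm : ∀ r s : R, r ≤ s → f r ≤ f s)
    (hbij : Function.Bijective f)
    (hnest : ∀ r s : R, IsNestedPair iR r s)
    (hreg : ∀ s : S, ¬ IsSmall iS s) :
    (∀ r s : R, f r ≤ f s → r ≤ s) ∧
    IsTreeSet iR ∧ IsTreeSet iS ∧
    (∀ r : R, ¬ IsSmall iR r) ∧ (∀ s : S, ¬ IsSmall iS s) := by
  obtain ⟨hiR1, hiR2⟩ := hiR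
  obtain ⟨hiS1, hiS2⟩ := hiS
  -- R is regular
  have hRreg : ∀ r : R, ¬ IsSmall iR r := by
    intro r hr
    exact hreg (f r) (by simpa [IsSmall, hfc] using hfm _ _ hr)
  -- f⁻¹ order-preserving
  have hinv : ∀ r s : R, f r ≤ f s → r ≤ s := by
    intro r s h
    rcases hnest r s with h1 | h2 | h3 | h4
    · exact h1
    · -- r ≤ iR s ⇒ s ≤ iR r ⇒ f r small
      have hs : s ≤ iR r := by
        have := hiR2 _ _ h2; rwa [hiR1] at this
      have : f r ≤ iS (f r) := le_trans h (by simpa [hfc] using hfm _ _ hs)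
      exact absurd this (hreg (f r))
    · -- iR r ≤ s ⇒ iR s ≤ r ⇒ iS (f s) ≤ f s small
      have hs : iR s ≤ r := by
        have := hiR2 _ _ h3; rwa [hiR1] at this
      have : iS (f s) ≤ iS (iS (f s)) := by
        rw [hiS1]
        exact le_trans (by simpa [hfc] using hfm _ _ hs) h
      exact absurd this (hreg (iS (f s)))
    · -- iR r ≤ iR s ⇒ s ≤ r ⇒ r = s
      have hs : s ≤ r := by
        have := hiR2 _ _ h4; rw [hiR1, hiR1] at this; exact this
      exact le_of_eq (hbij.1 (le_antisymm h (hfm _ _ hs)))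
  -- generic: regular + (r ≤ s ∧ r ≤ i s ⇒ small)
  have treeR : IsTreeSet iR := by
    refine ⟨hnest, ?_, ?_⟩
    · rintro r ⟨s, h1, h2, -, -⟩
      have hs : s ≤ iR r := by
        have := hiR2 _ _ h2; rwa [hiR1] at this
      exact hRreg r (le_trans h1 hs)
    · intro s hs
      exact hRreg s (le_of_eq hs)
  have treeS : IsTreeSet iS := by
    refine ⟨?_, ?_, ?_⟩
    · intro u v
      obtain ⟨r, rfl⟩ := hbij.2 u
      obtain ⟨s, rfl⟩ := hbij.2 v
      rcases hnest r s with h | h | h | h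
      · exact Or.inl (hfm _ _ h)
      · exact Or.inr (Or.inl (by simpa [hfc] using hfm _ _ h))
      · refine Or.inr (Or.inr (Or.inl ?_)); simpa [hfc] using hfm _ _ h
      · refine Or.inr (Or.inr (Or.inr ?_)); simpa [hfc] using hfm _ _ h
    · rintro u ⟨v, h1, h2, -, -⟩
      have hv : v ≤ iS u := by
        have := hiS2 _ _ h2; rwa [hiS1] at this
      exact hreg u (le_trans h1 hv)
    · intro s hs
      exact hreg s (le_of_eq hs)
  exact ⟨hinv, treeR, treeS, hRreg, hreg⟩
end

section
/- Let f: R → S be a bijective homomorphism of separation systems such that R is nested, S is a tree set, and for every r in R, if f(r) is small then r is small. Then f is an isomorphism of separation systems (its inverse is order-preserving). -/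
/-- a bijective homomorphism from a nested separation system
to a tree set, pulling small separations back to small separations, is an
isomorphism. -/
theorem stmt_3 {R S : Type*} [PartialOrder R] [PartialOrder S]
    (iR : R → R) (iS : S → S)
    (hiR : IsInvolution iR) (hiS : IsInvolution iS)
    (f : R → S)
    (hfc : ∀ r : R, f (iR r) = iS (f r))
    (hfm : ∀ r s : R, r ≤ s → f r ≤ f s)
    (hbij : Function.Bijective f)
    (hnest : ∀ r s : R, IsNestedPair iR r s)
    (htree : IsTreeSet iS)
    (hsmall : ∀ r : R, IsSmall iS (f r) → IsSmall iR r) :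
    ∀ r s : R, f r ≤ f s → r ≤ s := by
  intro r s hle
  obtain ⟨hnS, hntriv, hndeg⟩ := htree
  rcases hnest r s with h | h | h | h
  · exact h
  · -- r ≤ iR s
    have h1 : f r ≤ iS (f s) := by rw [← hfc]; exact hfm _ _ h
    by_cases he : f r = f s
    · exact le_of_eq (hbij.1 he)
    by_cases he2 : f r = iS (f s)
    · have hs : f s = iS (f r) := by rw [he2, hiS.1]
      have hsm : IsSmall iS (f r) := by rw [IsSmall, ← hs]; exact hle
      have hrs : r = iR s := hbij.1 (by rw [hfc]; exact he2)
      calc r ≤ iR r := hsmall r hsm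
        _ = s := by rw [hrs, hiR.1]
    · exact absurd ⟨f s, hle, h1, he, he2⟩ (hntriv (f r))
  · -- iR r ≤ s
    have h1 : iS (f r) ≤ f s := by rw [← hfc]; exact hfm _ _ h
    by_cases he : f r = f s
    · exact le_of_eq (hbij.1 he)
    by_cases he2 : iS (f s) = f r
    · have hrs : r = iR s := hbij.1 (by rw [hfc]; exact he2.symm)
      have hs : iS (f r) = f s := by rw [← he2, hiS.1]
      have hsm : IsSmall iS (f r) := by rw [IsSmall, hs]; exact hle
      calc r ≤ iR r := hsmall r hsm
        _ = s := by rw [hrs, hiR.1]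
    · have t1 : iS (f s) ≤ f r := by
        have := hiS.2 _ _ h1
        rwa [hiS.1] at this
      have t2 : iS (f s) ≤ iS (f r) := hiS.2 _ _ hle
      have t3 : iS (f s) ≠ iS (f r) := fun hq => he (hiS.1 (f r) ▸ hiS.1 (f s) ▸ congrArg iS hq).symm
      exact absurd ⟨f r, t1, t2, he2, t3⟩ (hntriv (iS (f s)))
  · -- iR r ≤ iR s
    have h1 : iS (f r) ≤ iS (f s) := by rw [← hfc, ← hfc]; exact hfm _ _ h
    have h2 : f s ≤ f r := by
      have := hiS.2 _ _ h1
      rwa [hiS.1, hiS.1] at this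
    exact le_of_eq (hbij.1 (le_antisymm hle h2))
end

section
/- Let τ be a chain-complete tree set and O a consistent orientation of τ that has at least two maximal elements. Then O splits: every element of O lies below some maximal element of O. -/
/-- in a chain-complete tree set, a consistent orientation with
at least two maximal elements splits. -/
theorem stmt_6 {α : Type*} [PartialOrder α] (i : α → α)
    (hi : IsInvolution i) (htree : IsTreeSet i)
    (hcc : SepChainComplete α)
    (O : Set α) (hO : IsOrientation i O) (hOc : IsConsistentOrientation i O)
    (m₁ m₂ : α) (h₁ : MaximalIn O m₁) (h₂ : MaximalIn O m₂) (hne : m₁ ≠ m₂) :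
    SplitsAt O := by
  obtain ⟨hii, hmono⟩ := hi
  -- Claim A: every element of O lies below j or below i j, for j maximal in O.
  have claimA : ∀ j, MaximalIn O j → ∀ t ∈ O, t ≤ j ∨ t ≤ i j := by
    intro j hj t ht
    rcases htree.1 t j with h | h | h | h
    · exact Or.inl h
    · exact Or.inr h
    · by_cases htj : t = j
      · exact Or.inl (le_of_eq htj)
      · have htij : t ≠ i j := by
          intro he
          exact (hO j).mp hj.1 (he ▸ ht)
        exact absurd h (hOc t ht j hj.1 htj htij)
    · have hjt : j ≤ t := by
        have h' := hmono _ _ h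
        rwa [hii, hii] at h'
      exact Or.inl (le_of_eq (hj.2 t ht hjt).symm)
  intro s hs
  have key : ∀ c ⊆ {t | t ∈ O ∧ s ≤ t}, IsChain (· ≤ ·) c → ∀ y ∈ c,
      ∃ ub ∈ {t | t ∈ O ∧ s ≤ t}, ∀ z ∈ c, z ≤ ub := by
    intro C hCS hC y hy
    obtain ⟨m, hm⟩ := hcc C ⟨y, hy⟩ hC
    have hsy : s ≤ y := (hCS hy).2
    by_cases hmO : m ∈ O
    · exact ⟨m, ⟨hmO, le_trans hsy (hm.1 hy)⟩, fun z hz => hm.1 hz⟩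
    · have him : i m ∈ O := by
        by_contra h
        exact hmO ((hO m).mpr h)
      by_cases hb1 : ∀ z ∈ C, z ≤ m₁
      · exact ⟨m₁, ⟨h₁.1, le_trans hsy (hb1 y hy)⟩, hb1⟩
      by_cases hb2 : ∀ z ∈ C, z ≤ m₂
      · exact ⟨m₂, ⟨h₂.1, le_trans hsy (hb2 y hy)⟩, hb2⟩
      exfalso
      push_neg at hb1 hb2
      obtain ⟨c₁, hc₁C, hc₁⟩ := hb1
      obtain ⟨c₂, hc₂C, hc₂⟩ := hb2
      have hc₁' : c₁ ≤ i m₁ := (claimA m₁ h₁ c₁ (hCS hc₁C).1).resolve_left hc₁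
      have hc₂' : c₂ ≤ i m₂ := (claimA m₂ h₂ c₂ (hCS hc₂C).1).resolve_left hc₂
      have hub1 : ∀ z ∈ C, z ≤ i m₁ := by
        intro z hz
        rcases claimA m₁ h₁ z (hCS hz).1 with h | h
        · rcases hC.total hz hc₁C with hzc | hcz
          · exact le_trans hzc hc₁'
          · exact absurd (le_trans hcz h) hc₁
        · exact h
      have hub2 : ∀ z ∈ C, z ≤ i m₂ := by
        intro z hz
        rcases claimA m₂ h₂ z (hCS hz).1 with h | h
        · rcases hC.total hz hc₂C with hzc | hcz
          · exact le_trans hzc hc₂'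
          · exact absurd (le_trans hcz h) hc₂
        · exact h
      have hm1 : m ≤ i m₁ := hm.2 (fun z hz => hub1 z hz)
      have hm2 : m ≤ i m₂ := hm.2 (fun z hz => hub2 z hz)
      have hm1' : m₁ ≤ i m := by
        have h' := hmono _ _ hm1
        rwa [hii] at h'
      have hm2' : m₂ ≤ i m := by
        have h' := hmono _ _ hm2
        rwa [hii] at h'
      have hm1im : m₁ ≠ i m := by
        intro he
        exact hne ((h₂.2 m₁ h₁.1 (he ▸ hm2')).symm)
      rcases claimA m₁ h₁ (i m) him with h | h
      · exact hne (h₂.2 m₁ h₁.1 (le_trans hm2' h)).symm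
      · have hm1m : m₁ ≤ m := by
          have h' := hmono _ _ h
          rwa [hii, hii] at h'
        have hm1nm : m₁ ≠ m := fun he => hmO (he ▸ h₁.1)
        exact htree.2.1 m₁ ⟨m, hm1m, hm1', hm1nm, hm1im⟩
  obtain ⟨mx, hsmx, hmx⟩ := zorn_le_nonempty₀ _ key s ⟨hs, le_refl s⟩
  refine ⟨mx, ⟨hmx.1.1, ?_⟩, hsmx⟩
  intro t ht hmt
  exact le_antisymm hmt (hmx.2 ⟨ht, le_trans hsmx hmt⟩ hmt)
end

section
/- Let τ be a chain-complete tree set and σ = {r, s, t} a star with exactly three elements. Then there exists a unique splitting star σ' of τ such that r, s, t lie below three distinct elements of σ'. -/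
namespace StmtSeven

variable {α : Type*} [PartialOrder α] {i : α → α}

lemma ii (hi : IsInvolution i) (x : α) : i (i x) = x := hi.1 x

lemma imono (hi : IsInvolution i) {x y : α} (h : x ≤ y) : i y ≤ i x := hi.2 x y h

lemma liswap (hi : IsInvolution i) {x y : α} (h : x ≤ i y) : y ≤ i x := by
  have h2 := hi.2 _ _ h; rwa [ii hi] at h2

lemma ilswap (hi : IsInvolution i) {x y : α} (h : i x ≤ y) : i y ≤ x := by
  have h2 := hi.2 _ _ h; rwa [ii hi] at h2

lemma iile (hi : IsInvolution i) {x y : α} (h : i x ≤ i y) : y ≤ x := by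
  have h2 := hi.2 _ _ h; rwa [ii hi, ii hi] at h2

lemma ieq (hi : IsInvolution i) {x y : α} (h : i x = i y) : x = y := by
  rw [← ii hi x, h, ii hi]

lemma neis (hi : IsInvolution i) {x y : α} (h : x ≠ i y) : y ≠ i x :=
  fun e => h (by rw [e, ii hi])

lemma notriv (htree : IsTreeSet i) {x y : α} (h1 : x ≤ y) (h2 : x ≤ i y) :
    x = y ∨ x = i y := by
  by_contra hc
  push_neg at hc
  exact htree.2.1 x ⟨y, h1, h2, hc.1, hc.2⟩

structure SD (i : α → α) (a b c : α) : Prop where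
  ab : a ≤ i b
  ac : a ≤ i c
  ba : b ≤ i a
  bc : b ≤ i c
  ca : c ≤ i a
  cb : c ≤ i b
  nab : a ≠ b
  nac : a ≠ c
  nbc : b ≠ c
  niab : a ≠ i b
  niac : a ≠ i c
  niba : b ≠ i a
  nibc : b ≠ i c
  nica : c ≠ i a
  nicb : c ≠ i b

lemma SD.swap {a b c : α} (sd : SD i a b c) : SD i b a c :=
  ⟨sd.ba, sd.bc, sd.ab, sd.ac, sd.cb, sd.ca, sd.nab.symm, sd.nbc, sd.nac,
   sd.niba, sd.nibc, sd.niab, sd.niac, sd.nicb, sd.nica⟩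

lemma SD.rot {a b c : α} (sd : SD i a b c) : SD i b c a :=
  ⟨sd.bc, sd.ba, sd.cb, sd.ca, sd.ab, sd.ac, sd.nbc, sd.nab.symm, sd.nac.symm,
   sd.nibc, sd.niba, sd.nicb, sd.nica, sd.niab, sd.niac⟩

lemma star_not_le (htree : IsTreeSet i) {a b c : α} (sd : SD i a b c) : ¬ b ≤ a := by
  intro h
  rcases notriv htree h sd.ba with h' | h'
  · exact sd.nab h'.symm
  · exact sd.niba h'

lemma base_ne (hi : IsInvolution i) (htree : IsTreeSet i) {a b c : α}
    (h1 : c ≤ i a) (h2 : c ≤ i b) (h3 : c ≠ a) (h4 : c ≠ b) : a ≠ i b := by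
  intro h
  have hcb : c ≤ b := by rw [h] at h1; rwa [ii hi] at h1
  rcases notriv htree hcb h2 with h' | h'
  · exact h4 h'
  · exact h3 (h'.trans h.symm)

end StmtSeven
namespace StmtSeven

variable {α : Type*} [PartialOrder α] {i : α → α}

lemma corner_max (hi : IsInvolution i) (htree : IsTreeSet i) (hcc : SepChainComplete α)
    {a b c : α} (sd : SD i a b c) :
    ∃ a', (a ≤ a' ∧ a' ≤ i b ∧ a' ≤ i c) ∧ ∀ x, a ≤ x → x ≤ i b → x ≤ i c → x ≤ a' := by
  have haC : a ∈ {x | a ≤ x ∧ x ≤ i b ∧ x ≤ i c} := ⟨le_rfl, sd.ab, sd.ac⟩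
  have hchain : IsChain (· ≤ ·) {x | a ≤ x ∧ x ≤ i b ∧ x ≤ i c} := by
    intro x hx y hy hxy
    obtain ⟨hx1, hx2, hx3⟩ := hx
    obtain ⟨hy1, hy2, hy3⟩ := hy
    rcases htree.1 x y with h | h | h | h
    · exact Or.inl h
    · rcases notriv htree hy1 (hx1.trans h) with h' | h'
      · exact Or.inr (by rw [← h']; exact hx1)
      · exfalso
        have hyia : y = i a := by rw [h', ii hi]
        have hba : b ≤ a := by rw [hyia] at hy2; exact iile hi hy2
        rcases notriv htree hba sd.ba with h'' | h''
        · exact sd.nab h''.symm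
        · have hby : b = y := h''.trans hyia.symm
          have hab2 : a ≤ b := by rw [hby]; exact hy1
          rcases notriv htree hab2 sd.ab with h3 | h3
          · exact sd.nab h3
          · exact sd.niab h3
    · exfalso
      have hbix : b ≤ i x := liswap hi hx2
      have hby : b ≤ y := hbix.trans h
      have hbiy : b ≤ i y := liswap hi hy2
      rcases notriv htree hby hbiy with h' | h'
      · have hab2 : a ≤ b := by rw [h']; exact hy1
        rcases notriv htree hab2 sd.ab with h3 | h3
        · exact sd.nab h3
        · exact sd.niab h3
      · have hyib : y = i b := by rw [h', ii hi]
        have hcb2 : c ≤ b := by rw [hyib] at hy3; exact iile hi hy3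
        rcases notriv htree hcb2 sd.cb with h3 | h3
        · exact sd.nbc h3.symm
        · exact sd.nicb h3
    · exact Or.inr (iile hi h)
  obtain ⟨m, hm⟩ := hcc _ ⟨a, haC⟩ hchain
  refine ⟨m, ⟨hm.1 haC, ?_, ?_⟩, fun x h1 h2 h3 => hm.1 ⟨h1, h2, h3⟩⟩
  · exact hm.2 (fun z hz => hz.2.1)
  · exact hm.2 (fun z hz => hz.2.2)

lemma cross (hi : IsInvolution i) (htree : IsTreeSet i) {a b c a' : α} (sd : SD i a b c)
    (h1 : a ≤ a') (h2 : a' ≤ i b) (h3 : a' ≤ i c) {x : α}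
    (hx1 : b ≤ x) (hx2 : x ≤ i a) (hx3 : x ≤ i c) : x ≤ i a' := by
  rcases htree.1 x a' with h | h | h | h
  · exfalso
    have hb : b ≤ i a' := liswap hi h2
    rcases notriv htree (hx1.trans h) hb with h' | h'
    · have hab2 : a ≤ b := by rw [h']; exact h1
      rcases notriv htree hab2 sd.ab with h'' | h''
      · exact sd.nab h''
      · exact sd.niab h''
    · have ha'ib : a' = i b := by rw [h', ii hi]
      have hcb : c ≤ b := by rw [ha'ib] at h3; exact iile hi h3
      rcases notriv htree hcb sd.cb with h'' | h''
      · exact sd.nbc h''.symm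
      · have hca' : c = a' := h''.trans ha'ib.symm
        have hac2 : a ≤ c := by rw [hca']; exact h1
        rcases notriv htree hac2 sd.ac with h3' | h3'
        · exact sd.nac h3'
        · exact sd.niac h3'
  · exact h
  · exfalso
    have hcx : c ≤ x := iile hi (h.trans h3)
    have hcix : c ≤ i x := liswap hi hx3
    rcases notriv htree hcx hcix with h' | h'
    · have hbc : b ≤ c := by rw [h']; exact hx1
      rcases notriv htree hbc sd.bc with h'' | h''
      · exact sd.nbc h''
      · exact sd.nibc h''
    · have hxic : x = i c := by rw [h', ii hi]
      have hac : a ≤ c := by rw [hxic] at hx2; exact iile hi hx2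
      rcases notriv htree hac sd.ac with h'' | h''
      · exact sd.nac h''
      · exact sd.niac h''
  · have hax : a' ≤ x := iile hi h
    have haix : a ≤ i x := liswap hi hx2
    rcases notriv htree (h1.trans hax) haix with h' | h'
    · exfalso
      have hba : b ≤ a := by rw [h']; exact hx1
      rcases notriv htree hba sd.ba with h'' | h''
      · exact sd.nab h''.symm
      · exact sd.niba h''
    · have hxia : x = i a := by rw [h', ii hi]
      have ha'ia : a' ≤ i a := by rw [← hxia]; exact hax
      have haia' : a ≤ i a' := liswap hi ha'ia
      rcases notriv htree h1 haia' with h'' | h''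
      · rw [hxia, h'']
      · exfalso
        have ha'eq : a' = i a := by rw [h'', ii hi]
        have hba : b ≤ a := by rw [ha'eq] at h2; exact iile hi h2
        rcases notriv htree hba sd.ba with h3' | h3'
        · exact sd.nab h3'.symm
        · exact sd.niba h3'

lemma primed_ne (hi : IsInvolution i) (htree : IsTreeSet i) {a b c a' b' : α} (sd : SD i a b c)
    (ha1 : a ≤ a') (ha2 : a' ≤ i b) (hb1 : b ≤ b') (hx : a' ≤ i b') : a' ≠ b' := by
  intro h
  have h2 : a' ≤ i a' := hx.trans (le_of_eq (by rw [h]))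
  rcases notriv htree ha1 (ha1.trans h2) with h' | h'
  · have hba : b ≤ a := by rw [h', h]; exact hb1
    rcases notriv htree hba sd.ba with h'' | h''
    · exact sd.nab h''.symm
    · exact sd.niba h''
  · have ha'ia : a' = i a := by rw [h', ii hi]
    have hba : b ≤ a := by rw [ha'ia] at ha2; exact iile hi ha2
    rcases notriv htree hba sd.ba with h'' | h''
    · exact sd.nab h''.symm
    · exact sd.niba h''

end StmtSeven
namespace StmtSeven

variable {α : Type*} [PartialOrder α] {i : α → α}

structure Setup (i : α → α) (a b c a' b' c' : α) : Prop where
  sd : SD i a b c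
  sd' : SD i a' b' c'
  la : a ≤ a'
  lb : b ≤ b'
  lc : c ≤ c'
  Ma : ∀ x, a ≤ x → x ≤ i b → x ≤ i c → x ≤ a'
  Mb : ∀ x, b ≤ x → x ≤ i a → x ≤ i c → x ≤ b'
  Mc : ∀ x, c ≤ x → x ≤ i a → x ≤ i b → x ≤ c'

lemma Setup.rot {a b c a' b' c' : α} (S : Setup i a b c a' b' c') :
    Setup i b c a b' c' a' :=
  ⟨S.sd.rot, S.sd'.rot, S.lb, S.lc, S.la,
   fun x h1 h2 h3 => S.Mb x h1 h3 h2,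
   fun x h1 h2 h3 => S.Mc x h1 h3 h2,
   S.Ma⟩

def Ostar (i : α → α) (p q r : α) : Set α :=
  {x | (x ≤ i p ∧ x ≤ i q) ∨ (x ≤ i p ∧ x ≤ i r) ∨ (x ≤ i q ∧ x ≤ i r)}

lemma Ostar_rot (p q r : α) : Ostar i p q r = Ostar i q r p := by
  ext x; simp only [Ostar, Set.mem_setOf_eq]; tauto

def Pset (i : α → α) (p q r : α) : Set α := {x | x ≤ i p ∧ x ≤ i q ∧ x ≤ i r}

lemma Pset_rot (p q r : α) : Pset i p q r = Pset i q r p := by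
  ext x; simp only [Pset, Set.mem_setOf_eq]; tauto


lemma mem_rot {p q r x : α} (h : x ∈ Ostar i p q r) : x ∈ Ostar i q r p := by
  rw [← Ostar_rot]; exact h

lemma not_mem_rot {p q r x : α} (h : x ∉ Ostar i p q r) : x ∉ Ostar i q r p := by
  rw [← Ostar_rot]; exact h

variable {a b c a' b' c' : α}

lemma inv_a'_not_mem (hi : IsInvolution i) (htree : IsTreeSet i)
    (S : Setup i a b c a' b' c') : i a' ∉ Ostar i a' b' c' := by
  rintro (⟨h1, h2⟩ | ⟨h1, h2⟩ | ⟨h1, h2⟩)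
  · exact star_not_le htree S.sd' (iile hi h2)
  · exact star_not_le htree S.sd'.swap.rot (iile hi h2)
  · exact star_not_le htree S.sd' (iile hi h1)

lemma not_both_aux (hi : IsInvolution i) (htree : IsTreeSet i)
    (S : Setup i a b c a' b' c') {u : α}
    (hiu : i u ∈ Ostar i a' b' c') (hu : u ∈ Ostar i a' b' c')
    (h1 : u ≤ i a') (h2 : i u ≤ i a') : False := by
  rcases notriv htree (iile hi h2) (liswap hi h1) with h | h
  · exact inv_a'_not_mem hi htree S (by rw [show i a' = i u from by rw [h]]; exact hiu)
  · exact inv_a'_not_mem hi htree S (by rw [show i a' = u from by rw [h, ii hi]]; exact hu)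

lemma share {p q r : α} {u v : α} (hu : u ∈ Ostar i p q r) (hv : v ∈ Ostar i p q r) :
    (u ≤ i p ∧ v ≤ i p) ∨ (u ≤ i q ∧ v ≤ i q) ∨ (u ≤ i r ∧ v ≤ i r) := by
  simp only [Ostar, Set.mem_setOf_eq] at hu hv
  tauto

lemma above_aux (hi : IsInvolution i) (htree : IsTreeSet i)
    (S : Setup i a b c a' b' c') {u : α}
    (hu : u ∉ Ostar i a' b' c') (hiu : i u ∉ Ostar i a' b' c') :
    a' ≤ u ∨ a' ≤ i u := by
  rcases htree.1 u a' with h | h | h | h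
  · exact absurd (Or.inr (Or.inr ⟨h.trans S.sd'.ab, h.trans S.sd'.ac⟩) : u ∈ Ostar i a' b' c') hu
  · exact Or.inr (liswap hi h)
  · exact absurd (Or.inr (Or.inr ⟨h.trans S.sd'.ab, h.trans S.sd'.ac⟩) : i u ∈ Ostar i a' b' c') hiu
  · exact Or.inl (iile hi h)

lemma orient (hi : IsInvolution i) (htree : IsTreeSet i)
    (S : Setup i a b c a' b' c') : IsOrientation i (Ostar i a' b' c') := by
  intro u
  constructor
  · intro hu hiu
    rcases share hu hiu with ⟨h1, h2⟩ | ⟨h1, h2⟩ | ⟨h1, h2⟩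
    · exact not_both_aux hi htree S hiu hu h1 h2
    · exact not_both_aux hi htree S.rot (mem_rot hiu) (mem_rot hu) h1 h2
    · exact not_both_aux hi htree S.rot.rot (mem_rot (mem_rot hiu))
        (mem_rot (mem_rot hu)) h1 h2
  · intro hiu
    by_contra hu
    have H1 := above_aux hi htree S hu hiu
    have H2 := above_aux hi htree S.rot (not_mem_rot hu) (not_mem_rot hiu)
    have H3 := above_aux hi htree S.rot.rot (not_mem_rot (not_mem_rot hu))
      (not_mem_rot (not_mem_rot hiu))
    rcases H1 with h1 | h1 <;> rcases H2 with h2 | h2 <;> rcases H3 with h3 | h3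
    · exact hiu (Or.inl ⟨imono hi h1, imono hi h2⟩)
    · exact hiu (Or.inl ⟨imono hi h1, imono hi h2⟩)
    · exact hiu (Or.inr (Or.inl ⟨imono hi h1, imono hi h3⟩))
    · exact hu (Or.inr (Or.inr ⟨liswap hi h2, liswap hi h3⟩))
    · exact hiu (Or.inr (Or.inr ⟨imono hi h2, imono hi h3⟩))
    · exact hu (Or.inr (Or.inl ⟨liswap hi h1, liswap hi h3⟩))
    · exact hu (Or.inl ⟨liswap hi h1, liswap hi h2⟩)
    · exact hu (Or.inl ⟨liswap hi h1, liswap hi h2⟩)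

lemma cons_aux (hi : IsInvolution i) (htree : IsTreeSet i)
    (S : Setup i a b c a' b' c') {x y : α}
    (hx : x ∈ Ostar i a' b' c') (h1 : x ≤ i a') (h2 : y ≤ i a')
    (hxiy : x ≠ i y) (hl : i x ≤ y) : False := by
  have hax : a' ≤ x := iile hi (hl.trans h2)
  rcases notriv htree hax (liswap hi h1) with h | h
  · have h4 : y ≤ i x := by rw [← h]; exact h2
    have h5 : y = i x := le_antisymm h4 hl
    exact hxiy (by rw [h5, ii hi])
  · have h6 : x = i a' := by rw [h, ii hi]
    exact inv_a'_not_mem hi htree S (by rw [← h6]; exact hx)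

lemma consistent (hi : IsInvolution i) (htree : IsTreeSet i)
    (S : Setup i a b c a' b' c') : IsConsistentOrientation i (Ostar i a' b' c') := by
  intro x hx y hy _ hxiy hl
  rcases share hx hy with ⟨h1, h2⟩ | ⟨h1, h2⟩ | ⟨h1, h2⟩
  · exact cons_aux hi htree S hx h1 h2 hxiy hl
  · exact cons_aux hi htree S.rot (mem_rot hx) h1 h2 hxiy hl
  · exact cons_aux hi htree S.rot.rot
      (mem_rot (mem_rot hx)) h1 h2 hxiy hl

lemma max_a' (hi : IsInvolution i) (htree : IsTreeSet i)
    (S : Setup i a b c a' b' c') : MaximalIn (Ostar i a' b' c') a' := by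
  refine ⟨Or.inr (Or.inr ⟨S.sd'.ab, S.sd'.ac⟩), ?_⟩
  intro z hz hle
  have hzO := hz
  rcases hz with ⟨h1, h2⟩ | ⟨h1, h2⟩ | ⟨h1, h2⟩
  · rcases notriv htree hle (liswap hi h1) with h | h
    · exact h
    · exfalso
      have hz' : i a' = z := by rw [h, ii hi]
      exact inv_a'_not_mem hi htree S (by rw [hz']; exact hzO)
  · rcases notriv htree hle (liswap hi h1) with h | h
    · exact h
    · exfalso
      have hz' : i a' = z := by rw [h, ii hi]
      exact inv_a'_not_mem hi htree S (by rw [hz']; exact hzO)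
  · have hza : z ≤ a' := S.Ma z (S.la.trans hle) (h1.trans (imono hi S.lb)) (h2.trans (imono hi S.lc))
    exact le_antisymm hle hza

end StmtSeven
namespace StmtSeven

variable {α : Type*} [PartialOrder α] {i : α → α} {a b c a' b' c' : α}

lemma pmem_rot {p q r x : α} (h : x ∈ Pset i p q r) : x ∈ Pset i q r p := by
  rw [← Pset_rot]; exact h

lemma p_eq_inv_false (hi : IsInvolution i) (htree : IsTreeSet i)
    (S : Setup i a b c a' b' c') {p : α} (hp : p ∈ Pset i a' b' c') (h : p = i a') : False := by
  rw [h] at hp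
  exact star_not_le htree S.sd' (iile hi hp.2.1)

lemma out_aux (hi : IsInvolution i) (htree : IsTreeSet i)
    (S : Setup i a b c a' b' c') {z : α}
    (h1 : z ≤ i b') (h2 : z ≤ i c') (h3 : ¬ z ≤ i a') : z ≤ a' := by
  rcases htree.1 z a' with h | h | h | h
  · exact h
  · exact absurd h h3
  · exfalso
    have hbz : b' ≤ z := iile hi (h.trans S.sd'.ab)
    rcases notriv htree hbz (liswap hi h1) with h' | h'
    · exact h3 (by rw [← h']; exact S.sd'.ba)
    · have hzib : z = i b' := by rw [h', ii hi]
      have hcb : c' ≤ b' := by rw [hzib] at h2; exact iile hi h2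
      exact star_not_le htree S.sd'.rot hcb
  · exact S.Ma z (S.la.trans (iile hi h)) (h1.trans (imono hi S.lb)) (h2.trans (imono hi S.lc))

lemma fin_aux (hi : IsInvolution i) (htree : IsTreeSet i)
    (S : Setup i a b c a' b' c') {p z : α}
    (hp : p ∈ Pset i a' b' c') (hle : p ≤ z) (hzg : z ≤ a') : p = z := by
  rcases notriv htree (hle.trans hzg) hp.1 with h | h
  · exact le_antisymm hle (hzg.trans (le_of_eq h.symm))
  · exact (p_eq_inv_false hi htree S hp h).elim

lemma escape (hi : IsInvolution i) (htree : IsTreeSet i)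
    (S : Setup i a b c a' b' c') {z : α}
    (hz : z ∈ Ostar i a' b' c') (hzP : z ∉ Pset i a' b' c') :
    z ≤ a' ∨ z ≤ b' ∨ z ≤ c' := by
  rcases hz with ⟨h1, h2⟩ | ⟨h1, h2⟩ | ⟨h1, h2⟩
  · have h3 : ¬ z ≤ i c' := fun hc => hzP ⟨h1, h2, hc⟩
    exact Or.inr (Or.inr (out_aux hi htree S.rot.rot h1 h2 h3))
  · have h3 : ¬ z ≤ i b' := fun hb => hzP ⟨h1, hb, h2⟩
    exact Or.inr (Or.inl (out_aux hi htree S.rot h2 h1 h3))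
  · have h3 : ¬ z ≤ i a' := fun ha => hzP ⟨ha, h1, h2⟩
    exact Or.inl (out_aux hi htree S h1 h2 h3)

lemma maxP_maxO (hi : IsInvolution i) (htree : IsTreeSet i)
    (S : Setup i a b c a' b' c') {p : α} (hp : p ∈ Pset i a' b' c')
    (hpm : ∀ q ∈ Pset i a' b' c', p ≤ q → p = q) :
    MaximalIn (Ostar i a' b' c') p := by
  refine ⟨Or.inl ⟨hp.1, hp.2.1⟩, ?_⟩
  intro z hz hle
  by_cases hzP : z ∈ Pset i a' b' c'
  · exact hpm z hzP hle
  · rcases escape hi htree S hz hzP with h | h | h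
    · exact fin_aux hi htree S hp hle h
    · exact fin_aux hi htree S.rot (pmem_rot hp) hle h
    · exact fin_aux hi htree S.rot.rot (pmem_rot (pmem_rot hp)) hle h

lemma splitsO (hi : IsInvolution i) (htree : IsTreeSet i) (hcc : SepChainComplete α)
    (S : Setup i a b c a' b' c') : SplitsAt (Ostar i a' b' c') := by
  intro x hx
  by_cases hxP : x ∈ Pset i a' b' c'
  · have hbound : ∀ C ⊆ Pset i a' b' c', IsChain (· ≤ ·) C → ∀ y ∈ C,
        ∃ ub ∈ Pset i a' b' c', ∀ z ∈ C, z ≤ ub := by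
      intro C hC hchain y hy
      obtain ⟨m, hm⟩ := hcc C ⟨y, hy⟩ hchain
      exact ⟨m, ⟨hm.2 (fun z hz => (hC hz).1), hm.2 (fun z hz => (hC hz).2.1),
        hm.2 (fun z hz => (hC hz).2.2)⟩, fun z hz => hm.1 hz⟩
    obtain ⟨m, hxm, hm⟩ := zorn_le_nonempty₀ (Pset i a' b' c') hbound x hxP
    exact ⟨m, maxP_maxO hi htree S hm.1
      (fun q hq hle => le_antisymm hle (hm.2 hq hle)), hxm⟩
  · rcases escape hi htree S hx hxP with h | h | h
    · exact ⟨a', max_a' hi htree S, h⟩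
    · refine ⟨b', ?_, h⟩
      rw [Ostar_rot]
      exact max_a' hi htree S.rot
    · refine ⟨c', ?_, h⟩
      rw [Ostar_rot, Ostar_rot]
      exact max_a' hi htree S.rot.rot

lemma star_of_max (hi : IsInvolution i) (htree : IsTreeSet i) {O₂ : Set α}
    (ho : IsOrientation i O₂) (hcons : IsConsistentOrientation i O₂) {m1 m2 : α}
    (h1 : MaximalIn O₂ m1) (h2 : MaximalIn O₂ m2) (hne : m1 ≠ m2) : m1 ≤ i m2 := by
  rcases htree.1 m1 m2 with h | h | h | h
  · exact absurd (h1.2 m2 h2.1 h) hne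
  · exact h
  · exfalso
    have hne2 : m1 ≠ i m2 := by
      intro he
      exact ((ho m2).mp h2.1) (he ▸ h1.1)
    exact hcons m1 h1.1 m2 h2.1 hne hne2 h
  · exact absurd (h2.2 m1 h1.1 (iile hi h)).symm hne

lemma mem_or_inv {O₂ : Set α} (ho : IsOrientation i O₂) (u : α) : u ∈ O₂ ∨ i u ∈ O₂ := by
  by_cases h : u ∈ O₂
  · exact Or.inl h
  · exact Or.inr (by by_contra h2; exact h ((ho u).mpr h2))

end StmtSeven
namespace StmtSeven

variable {α : Type*} [PartialOrder α] {i : α → α} {a b c a' b' c' : α}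

lemma stepA (hi : IsInvolution i) (htree : IsTreeSet i)
    (S : Setup i a b c a' b' c') {O₂ : Set α}
    (ho : IsOrientation i O₂) (hcons : IsConsistentOrientation i O₂) (hsp : SplitsAt O₂)
    {a1 b1 c1 : α} (hma : MaximalIn O₂ a1) (hmb : MaximalIn O₂ b1) (hmc : MaximalIn O₂ c1)
    (nab1 : a1 ≠ b1) (nac1 : a1 ≠ c1) (nbc1 : b1 ≠ c1)
    (hla : a ≤ a1) (hlb : b ≤ b1) (hlc : c ≤ c1) : a1 = a' := by
  have h1 : a1 ≤ i b1 := star_of_max hi htree ho hcons hma hmb nab1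
  have h2 : a1 ≤ i c1 := star_of_max hi htree ho hcons hma hmc nac1
  have hC : a1 ≤ a' := S.Ma a1 hla (h1.trans (imono hi hlb)) (h2.trans (imono hi hlc))
  by_contra hne
  have ha'n : a' ∉ O₂ := fun h => hne (hma.2 a' h hC)
  have hia' : i a' ∈ O₂ := (mem_or_inv ho a').resolve_left ha'n
  obtain ⟨m, hmm, hml⟩ := hsp (i a') hia'
  have ha'b : a' ≤ i b := S.sd'.ab.trans (imono hi S.lb)
  have ha'c : a' ≤ i c := S.sd'.ac.trans (imono hi S.lc)
  by_cases hm : m = a1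
  · rw [hm] at hml
    rcases notriv htree hml (imono hi hC) with h | h
    · have haia' : a ≤ i a' := by rw [h]; exact hla
      rcases notriv htree S.la haia' with h' | h'
      · have ha1ia : a1 = i a := by rw [← h, h']
        have hba : b ≤ a := by
          have hb2 : a1 ≤ i b := h1.trans (imono hi hlb)
          rw [ha1ia] at hb2
          exact iile hi hb2
        rcases notriv htree hba S.sd.ba with h'' | h''
        · exact S.sd.nab h''.symm
        · have hb1' : b = a1 := by rw [h'', ← ha1ia]
          have hbib1 : b ≤ i b1 := by rw [hb1']; exact h1
          rcases notriv htree hlb hbib1 with h3 | h3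
          · exact nab1 (by rw [← hb1', h3])
          · have hcontra : a1 = i b1 := by rw [← hb1', h3]
            exact ((ho b1).mp hmb.1) (hcontra ▸ hma.1)
      · have ha'ia : a' = i a := by rw [h', ii hi]
        have hba : b ≤ a := by rw [ha'ia] at ha'b; exact iile hi ha'b
        rcases notriv htree hba S.sd.ba with h'' | h''
        · exact S.sd.nab h''.symm
        · exact S.sd.niba h''
    · exact hne (ieq hi h).symm
  · have h5 : a1 ≤ i m := star_of_max hi htree ho hcons hma hmm (fun hh => hm hh.symm)
    have him : i m ≤ a' := ilswap hi hml
    have himb : i m ≤ i b := him.trans ha'b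
    have himc : i m ≤ i c := him.trans ha'c
    have hbm : b ≤ m := iile hi himb
    by_cases hmb1 : m = b1
    · have hcb1 : c ≤ b1 := by rw [← hmb1]; exact iile hi himc
      have hcib1 : c ≤ i b1 := hlc.trans (star_of_max hi htree ho hcons hmc hmb nbc1.symm)
      rcases notriv htree hcb1 hcib1 with h' | h'
      · have hbc : b ≤ c := by rw [hmb1, ← h'] at hbm; exact hbm
        rcases notriv htree hbc S.sd.bc with h'' | h''
        · exact S.sd.nbc h''
        · exact S.sd.nibc h''
      · have haim : a ≤ i m := hla.trans h5
        have haC2 : a ≤ c := by rw [hmb1, ← h'] at haim; exact haim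
        rcases notriv htree haC2 S.sd.ac with h'' | h''
        · exact S.sd.nac h''
        · exact S.sd.niac h''
    · have hbim : b ≤ i m := hlb.trans (star_of_max hi htree ho hcons hmb hmm (fun hh => hmb1 hh.symm))
      rcases notriv htree hbm hbim with h' | h'
      · have hcm : c ≤ m := iile hi himc
        have hcb : c ≤ b := by rw [h']; exact hcm
        rcases notriv htree hcb S.sd.cb with h'' | h''
        · exact S.sd.nbc h''.symm
        · have haim : a ≤ i m := hla.trans h5
          have hac : a ≤ c := by rw [h'', h']; exact haim
          rcases notriv htree hac S.sd.ac with h3 | h3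
          · exact S.sd.nac h3
          · exact S.sd.niac h3
      · have haim : a ≤ i m := hla.trans h5
        have hab2 : a ≤ b := by rw [h']; exact haim
        rcases notriv htree hab2 S.sd.ab with h'' | h''
        · exact S.sd.nab h''
        · exact S.sd.niab h''

lemma unique_shape (hi : IsInvolution i) (htree : IsTreeSet i)
    (S : Setup i a b c a' b' c') {O₂ : Set α}
    (ho : IsOrientation i O₂) (hcons : IsConsistentOrientation i O₂) (hsp : SplitsAt O₂)
    {a1 b1 c1 : α} (hma : MaximalIn O₂ a1) (hmb : MaximalIn O₂ b1) (hmc : MaximalIn O₂ c1)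
    (nab1 : a1 ≠ b1) (nac1 : a1 ≠ c1) (nbc1 : b1 ≠ c1)
    (hla : a ≤ a1) (hlb : b ≤ b1) (hlc : c ≤ c1) :
    {m | MaximalIn O₂ m} =
      ({a', b', c'} : Set α) ∪
        {p | p ∈ Pset i a' b' c' ∧ ∀ q ∈ Pset i a' b' c', p ≤ q → p = q} := by
  have ea : a1 = a' := stepA hi htree S ho hcons hsp hma hmb hmc nab1 nac1 nbc1 hla hlb hlc
  have eb : b1 = b' := stepA hi htree S.rot ho hcons hsp hmb hmc hma nbc1 nab1.symm nac1.symm hlb hlc hla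
  have ec : c1 = c' := stepA hi htree S.rot.rot ho hcons hsp hmc hma hmb nac1.symm nbc1.symm nab1 hlc hla hlb
  rw [ea] at hma
  rw [eb] at hmb
  rw [ec] at hmc
  ext m
  simp only [Set.mem_union, Set.mem_insert_iff, Set.mem_singleton_iff, Set.mem_setOf_eq]
  constructor
  · intro hm
    by_cases e1 : m = a'
    · exact Or.inl (Or.inl e1)
    by_cases e2 : m = b'
    · exact Or.inl (Or.inr (Or.inl e2))
    by_cases e3 : m = c'
    · exact Or.inl (Or.inr (Or.inr e3))
    right
    have hP : m ∈ Pset i a' b' c' :=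
      ⟨star_of_max hi htree ho hcons hm hma e1, star_of_max hi htree ho hcons hm hmb e2,
       star_of_max hi htree ho hcons hm hmc e3⟩
    refine ⟨hP, ?_⟩
    intro q hq hle
    rcases mem_or_inv ho q with hqO | hqO
    · exact hm.2 q hqO hle
    · exfalso
      obtain ⟨m2, hm2, hql⟩ := hsp (i q) hqO
      have haq : a' ≤ i q := liswap hi hq.1
      have he : a' = m2 := hma.2 m2 hm2.1 (haq.trans hql)
      have hqa : i q = a' := le_antisymm (by rw [he]; exact hql) haq
      exact p_eq_inv_false hi htree S hq (by rw [← hqa, ii hi])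
  · intro hm
    rcases hm with (h | h | h) | ⟨hP, hPmax⟩
    · rw [h]; exact hma
    · rw [h]; exact hmb
    · rw [h]; exact hmc
    · have hmO : m ∈ O₂ := by
        rcases mem_or_inv ho m with h | h
        · exact h
        · exfalso
          obtain ⟨m2, hm2, hml⟩ := hsp (i m) h
          have ham : a' ≤ i m := liswap hi hP.1
          have he : a' = m2 := hma.2 m2 hm2.1 (ham.trans hml)
          have hee : i m = a' := le_antisymm (by rw [he]; exact hml) ham
          exact p_eq_inv_false hi htree S hP (by rw [← hee, ii hi])
      obtain ⟨m3, hm3, hlm⟩ := hsp m hmO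
      by_cases e1 : m3 = a'
      · rcases notriv htree (show m ≤ a' by rw [← e1]; exact hlm) hP.1 with h' | h'
        · rw [h']; exact hma
        · exact (p_eq_inv_false hi htree S hP h').elim
      · by_cases e2 : m3 = b'
        · rcases notriv htree (show m ≤ b' by rw [← e2]; exact hlm) hP.2.1 with h' | h'
          · rw [h']; exact hmb
          · exact (p_eq_inv_false hi htree S.rot (pmem_rot hP) h').elim
        · by_cases e3 : m3 = c'
          · rcases notriv htree (show m ≤ c' by rw [← e3]; exact hlm) hP.2.2 with h' | h'
            · rw [h']; exact hmc
            · exact (p_eq_inv_false hi htree S.rot.rot (pmem_rot (pmem_rot hP)) h').elim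
          · have hm3P : m3 ∈ Pset i a' b' c' :=
              ⟨star_of_max hi htree ho hcons hm3 hma e1, star_of_max hi htree ho hcons hm3 hmb e2,
               star_of_max hi htree ho hcons hm3 hmc e3⟩
            have heq := hPmax m3 hm3P hlm
            rw [heq]; exact hm3

end StmtSeven
open StmtSeven
/-- for a three-element star in a chain-complete tree set there
is a unique splitting star whose elements lie above the star's three elements,
each below a different element. -/
theorem stmt_7 {α : Type*} [PartialOrder α] (i : α → α)
    (hi : IsInvolution i) (htree : IsTreeSet i)
    (hcc : SepChainComplete α)
    (r s t : α) (hrs : r ≠ s) (hrt : r ≠ t) (hst : s ≠ t)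
    (hstar : IsSepStar i {r, s, t}) :
    ∃! σ' : Set α, IsSplittingStar i σ' ∧
      ∃ r' ∈ σ', ∃ s' ∈ σ', ∃ t' ∈ σ',
        r' ≠ s' ∧ r' ≠ t' ∧ s' ≠ t' ∧ r ≤ r' ∧ s ≤ s' ∧ t ≤ t' := by
  classical
  have hrmem : r ∈ ({r, s, t} : Set α) := by simp
  have hsmem : s ∈ ({r, s, t} : Set α) := by simp
  have htmem : t ∈ ({r, s, t} : Set α) := by simp
  have h1 : r ≤ i s := hstar r hrmem s hsmem hrs
  have h2 : r ≤ i t := hstar r hrmem t htmem hrt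
  have h3 : s ≤ i r := hstar s hsmem r hrmem hrs.symm
  have h4 : s ≤ i t := hstar s hsmem t htmem hst
  have h5 : t ≤ i r := hstar t htmem r hrmem hrt.symm
  have h6 : t ≤ i s := hstar t htmem s hsmem hst.symm
  have nrs : r ≠ i s := base_ne hi htree h5 h6 hrt.symm hst.symm
  have nrt : r ≠ i t := base_ne hi htree h3 h4 hrs.symm hst
  have nst : s ≠ i t := base_ne hi htree h1 h2 hrs hrt
  have sd0 : SD i r s t :=
    ⟨h1, h2, h3, h4, h5, h6, hrs, hrt, hst, nrs, nrt, neis hi nrs, nst, neis hi nrt, neis hi nst⟩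
  obtain ⟨r', ⟨lr, r's, r't⟩, Mr⟩ := corner_max hi htree hcc sd0
  obtain ⟨s', ⟨ls, s'r, s't⟩, Ms⟩ := corner_max hi htree hcc sd0.swap
  obtain ⟨t', ⟨lt, t'r, t's⟩, Mt⟩ := corner_max hi htree hcc sd0.rot.rot
  have hs'r' : s' ≤ i r' := cross hi htree sd0 lr r's r't ls s'r s't
  have ht'r' : t' ≤ i r' := cross hi htree sd0.swap.rot lr r't r's lt t'r t's
  have ht's' : t' ≤ i s' := cross hi htree sd0.rot ls s't s'r lt t's t'r
  have hr's' : r' ≤ i s' := liswap hi hs'r'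
  have hr't' : r' ≤ i t' := liswap hi ht'r'
  have hs't' : s' ≤ i t' := liswap hi ht's'
  have n1 : r' ≠ s' := primed_ne hi htree sd0 lr r's ls hr's'
  have n2 : r' ≠ t' := primed_ne hi htree sd0.swap.rot lr r't lt hr't'
  have n3 : s' ≠ t' := primed_ne hi htree sd0.rot ls s't lt hs't'
  have m1 : r' ≠ i s' := base_ne hi htree ht'r' ht's' n2.symm n3.symm
  have m2 : r' ≠ i t' := base_ne hi htree hs'r' hs't' n1.symm n3
  have m3 : s' ≠ i t' := base_ne hi htree hr's' hr't' n1 n2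
  have sd' : SD i r' s' t' :=
    ⟨hr's', hr't', hs'r', hs't', ht'r', ht's', n1, n2, n3, m1, m2, neis hi m1, m3,
     neis hi m2, neis hi m3⟩
  have S : Setup i r s t r' s' t' := ⟨sd0, sd', lr, ls, lt, Mr, Ms, Mt⟩
  have horient := orient hi htree S
  have hcons := consistent hi htree S
  have hsplits := splitsO hi htree hcc S
  have hmr : MaximalIn (Ostar i r' s' t') r' := max_a' hi htree S
  have hms : MaximalIn (Ostar i r' s' t') s' := by
    rw [Ostar_rot]; exact max_a' hi htree S.rot
  have hmt : MaximalIn (Ostar i r' s' t') t' := by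
    rw [Ostar_rot, Ostar_rot]; exact max_a' hi htree S.rot.rot
  refine ⟨{m | MaximalIn (Ostar i r' s' t') m},
    ⟨⟨Ostar i r' s' t', horient, hcons, hsplits, rfl⟩,
      r', hmr, s', hms, t', hmt, n1, n2, n3, lr, ls, lt⟩, ?_⟩
  intro y hy
  obtain ⟨⟨O₂, ho2, hc2, hs2, hy2⟩, r1, hr1, s1, hs1, t1, ht1, n1', n2', n3', l1, l2, l3⟩ := hy
  rw [hy2] at hr1 hs1 ht1
  have e2 := unique_shape hi htree S ho2 hc2 hs2 hr1 hs1 ht1 n1' n2' n3' l1 l2 l3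
  have e1 := unique_shape hi htree S horient hcons hsplits hmr hms hmt n1 n2 n3 lr ls lt
  rw [hy2, e2, e1]
end

section
/- Let τ be a tree set, D a selection, and r, s, x, y ∈ τ with r ≤ x, y ≤ s, r ∼_D s, and x ∼_D y. Then r ∼_D x. (This establishes the antisymmetry of the induced relation ≤ on the quotient τ/D.) -/
lemma dplus_mono {α : Type*} [PartialOrder α] (i : α → α)
    (hi : IsInvolution i) (htree : IsTreeSet i) (D : Set α)
    {a b : α} (hab : a ≤ b) : Dplus i D a ⊆ Dplus i D b := by
  rintro d ⟨hd, hda, hna, hnia⟩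
  refine ⟨hd, hda.trans hab, ?_, ?_⟩
  · rintro rfl
    exact hna (le_antisymm hab hda).symm
  · rintro rfl
    exact htree.2.1 (i b) ⟨a, hda, hi.2 a b hab, hna, hnia⟩

/-- antisymmetry of the induced relation on `τ/D`. -/
theorem stmt_10 {α : Type*} [PartialOrder α] (i : α → α)
    (hi : IsInvolution i) (htree : IsTreeSet i)
    (D : Set α) (hD : IsSelection i D)
    (r s x y : α) (hrx : r ≤ x) (hys : y ≤ s)
    (hrs : DEquiv i D r s) (hxy : DEquiv i D x y) :
    DEquiv i D r x := by
  have h1 : Dplus i D r ⊆ Dplus i D x := dplus_mono i hi htree D hrx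
  have h2 : Dplus i D x = Dplus i D y := hxy.1
  have h3 : Dplus i D y ⊆ Dplus i D s := dplus_mono i hi htree D hys
  have h4 : Dplus i D s = Dplus i D r := hrs.1.symm
  have hxr : i x ≤ i r := hi.2 r x hrx
  have hsy : i s ≤ i y := hi.2 y s hys
  have h5 : Dplus i D (i x) ⊆ Dplus i D (i r) := dplus_mono i hi htree D hxr
  have h6 : Dplus i D (i s) ⊆ Dplus i D (i y) := dplus_mono i hi htree D hsy
  constructor
  · exact Set.Subset.antisymm h1 (h2 ▸ (h4 ▸ h3))
  · show Dplus i D (i r) = Dplus i D (i x)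
    have hrs' : Dplus i D (i r) = Dplus i D (i s) := hrs.2
    have hxy' : Dplus i D (i x) = Dplus i D (i y) := hxy.2
    refine Set.Subset.antisymm ?_ h5
    rw [hrs', hxy']
    exact h6
end

section
/- Let τ be a chain-complete tree set, D a branch-closed selection, and σ a splitting star of τ that meets D. Then for distinct r, s ∈ σ we have r ∼_D s if and only if neither r nor s lies in D. In particular, if σ is infinite, exactly one D-equivalence class contains infinitely many elements of σ, and every other class contains at most one element of σ. -/
/-- for a splitting star `σ` meeting a branch-closed selection
`D`, two distinct elements of `σ` are `D`-equivalent iff neither lies in `D`;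
if `σ` is infinite there is exactly one class meeting `σ` infinitely, and
all other classes meet `σ` in at most one element. -/
theorem stmt_15 {α : Type*} [PartialOrder α] (i : α → α)
    (hi : IsInvolution i) (htree : IsTreeSet i)
    (hcc : SepChainComplete α)
    (D : Set α) (hD : IsSelection i D) (hbc : BranchClosed i D)
    (σ : Set α) (hσ : IsSplittingStar i σ) (hmeet : (σ ∩ D).Nonempty) :
    (∀ r ∈ σ, ∀ s ∈ σ, r ≠ s → (DEquiv i D r s ↔ (r ∉ D ∧ s ∉ D))) ∧
    (σ.Infinite → ∃ t ∈ σ, {x ∈ σ | DEquiv i D x t}.Infinite ∧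
      (∀ t' ∈ σ, {x ∈ σ | DEquiv i D x t'}.Infinite → DEquiv i D t' t) ∧
      ∀ r ∈ σ, ∀ s ∈ σ, ¬ DEquiv i D r t → ¬ DEquiv i D s t →
        DEquiv i D r s → r = s) := by
  obtain ⟨O, hO, hcons, hsplit, hσO⟩ := hσ
  obtain ⟨w, hwσ, hwD⟩ := hmeet
  have hmem : ∀ x ∈ σ, x ∈ O := fun x hx => by rw [hσO] at hx; exact hx.1
  have hmax : ∀ x ∈ σ, ∀ t ∈ O, x ≤ t → x = t := fun x hx => by
    rw [hσO] at hx; exact hx.2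
  have hstar : ∀ x ∈ σ, ∀ y ∈ σ, x ≠ y → x ≤ i y := by
    intro x hx y hy hxy
    have hxO := hmem x hx; have hyO := hmem y hy
    have hxiy : x ≠ i y := fun h => ((hO y).mp hyO) (h ▸ hxO)
    rcases htree.1 x y with h | h | h | h
    · exact absurd (hmax x hx y hyO h) hxy
    · exact h
    · exact absurd h (hcons x hxO y hyO hxy hxiy)
    · have hyx : y ≤ x := by
        have := hi.2 _ _ h
        rwa [hi.1, hi.1] at this
      exact absurd (hmax y hy x hxO hyx).symm hxy
  -- D⁺(x) = ∅ for branching points x ∈ σ \ D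
  have hDplus : ∀ x ∈ σ, x ∉ D →
      (∃ y ∈ σ, ∃ z ∈ σ, y ≠ z ∧ y ≠ x ∧ z ≠ x) → Dplus i D x = ∅ := by
    intro x hx hxD hbr
    ext d
    simp only [Dplus, Set.mem_setOf_eq, Set.mem_empty_iff_false, iff_false]
    rintro ⟨hdD, hdx, _, _⟩
    have hwx : x ≠ w := fun h => hxD (h ▸ hwD)
    have hxiw : x ≤ i w := hstar x hx w hwσ hwx
    exact hxD (hbc x ⟨σ, ⟨O, hO, hcons, hsplit, hσO⟩, hx, hbr⟩
      ⟨d, hdD, w, hwD, hdx, hxiw⟩)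
  -- D⁻(x) = D ∩ O for x ∈ σ \ D with D⁺(x) = ∅
  have hDminus : ∀ x ∈ σ, x ∉ D → Dplus i D x = ∅ →
      Dminus i D x = {d | d ∈ D ∧ d ∈ O} := by
    intro x hx hxD hplus
    ext d
    simp only [Dminus, Dplus, Set.mem_setOf_eq]
    constructor
    · rintro ⟨hdD, hdix, hdnix, _⟩
      refine ⟨hdD, ?_⟩
      by_contra hdO
      have hidO : i d ∈ O := by
        rw [hO (i d), hi.1]; exact hdO
      have hxid : x ≤ i d := by
        have := hi.2 _ _ hdix; rwa [hi.1] at this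
      have hx_eq : x = i d := hmax x hx (i d) hidO hxid
      exact hdnix (((congrArg i hx_eq).trans (hi.1 d)).symm)
    · rintro ⟨hdD, hdO⟩
      obtain ⟨m, hmmax, hdm⟩ := hsplit d hdO
      have hmσ : m ∈ σ := by rw [hσO]; exact hmmax
      have hdnx : d ≠ x := fun h => hxD (h ▸ hdD)
      have hdnix : d ≠ i x := fun h => (hO x).mp (hmem x hx) (h ▸ hdO)
      by_cases hmx : m = x
      · exfalso
        have hmem' : d ∈ Dplus i D x := ⟨hdD, hmx ▸ hdm, hdnx, hdnix⟩
        rw [hplus] at hmem'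
        exact hmem'
      · have hmix : m ≤ i x := hstar m hmσ x hx hmx
        refine ⟨hdD, le_trans hdm hmix, hdnix, ?_⟩
        rw [hi.1]; exact hdnx
  -- if r ∈ D then r is not equivalent to any other s ∈ σ
  have hnotequiv : ∀ r ∈ σ, ∀ s ∈ σ, r ≠ s → r ∈ D → ¬ DEquiv i D r s := by
    intro r hr s hs hrs hrD heq
    have hrmem : r ∈ Dminus i D s := by
      refine ⟨hrD, hstar r hr s hs hrs, ?_, ?_⟩
      · exact fun h => (hO s).mp (hmem s hs) (h ▸ hmem r hr)
      · rw [hi.1]; exact hrs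
    rw [← heq.2] at hrmem
    exact hrmem.2.2.2 (hi.1 r).symm
  have part1 : ∀ r ∈ σ, ∀ s ∈ σ, r ≠ s → (DEquiv i D r s ↔ (r ∉ D ∧ s ∉ D)) := by
    intro r hr s hs hrs
    constructor
    · intro heq
      refine ⟨fun hrD => hnotequiv r hr s hs hrs hrD heq,
        fun hsD => hnotequiv s hs r hr hrs.symm hsD ⟨heq.1.symm, heq.2.symm⟩⟩
    · rintro ⟨hrD, hsD⟩
      have hwr : w ≠ r := fun h => hrD (h ▸ hwD)
      have hws : w ≠ s := fun h => hsD (h ▸ hwD)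
      have hsw : s ≠ w := fun h => hsD (h ▸ hwD)
      have hrw : r ≠ w := fun h => hrD (h ▸ hwD)
      have hpr := hDplus r hr hrD ⟨s, hs, w, hwσ, hsw, hrs.symm, hwr⟩
      have hps := hDplus s hs hsD ⟨r, hr, w, hwσ, hrw, hrs, hws⟩
      exact ⟨hpr.trans hps.symm,
        (hDminus r hr hrD hpr).trans (hDminus s hs hsD hps).symm⟩
  refine ⟨part1, ?_⟩
  intro hinf
  have hsd : (σ \ D).Infinite := hinf.diff hD.1
  obtain ⟨t, htσ, htD⟩ := hsd.nonempty
  have hclass : ∀ x ∈ σ, x ∉ D → DEquiv i D x t := by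
    intro x hxσ hxD
    by_cases hxt : x = t
    · subst hxt; exact ⟨rfl, rfl⟩
    · exact (part1 x hxσ t htσ hxt).mpr ⟨hxD, htD⟩
  refine ⟨t, htσ, ?_, ?_, ?_⟩
  · refine Set.Infinite.mono ?_ hsd
    intro x hx
    exact ⟨hx.1, hclass x hx.1 hx.2⟩
  · intro t' ht'σ ht'inf
    obtain ⟨x, hxmem, hxt'⟩ := (ht'inf.diff (Set.finite_singleton t')).nonempty
    obtain ⟨⟨hxσ, hxeq⟩, hxt'⟩ := And.intro hxmem (fun h => hxt' (Set.mem_singleton_iff.mpr h))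
    have hnd := (part1 x hxσ t' ht'σ hxt').mp hxeq
    exact hclass t' ht'σ hnd.2
  · intro r hr s hs hrt _ hrs
    by_contra hne
    have h := (part1 r hr s hs hne).mp hrs
    exact hrt (hclass r hr h.1)
end

section
/- Let τ be a chain-complete tree set, D a branch-closed selection, and σ a splitting star of τ meeting at least three distinct D-equivalence classes. Then σ ∩ D is non-empty. -/
private lemma dplus_mem {α : Type*} [PartialOrder α] {i : α → α} {D : Set α} {x d : α}
    (h1 : d ∈ D) (h2 : d ≤ x) (h3 : d ≠ x) (h4 : d ≠ i x) : d ∈ Dplus i D x :=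
  ⟨h1, h2, h3, h4⟩

private lemma dplus_dest {α : Type*} [PartialOrder α] {i : α → α} {D : Set α} {x d : α}
    (h : d ∈ Dplus i D x) : d ∈ D ∧ d ≤ x ∧ d ≠ x ∧ d ≠ i x := h

private lemma caseI_aux {α : Type*} [PartialOrder α] (i : α → α)
    (hinv : ∀ s, i (i s) = s) (hrev : ∀ r s : α, r ≤ s → i s ≤ i r)
    (hnested : ∀ r s : α, IsNestedPair i r s)
    (hnotriv : ∀ r : α, ¬ IsTrivialSep i r)
    (D σ O : Set α)
    (hstar : ∀ a ∈ σ, ∀ b ∈ σ, a ≠ b → a ≤ i b)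
    (hsplit : ∀ e ∈ O, ∃ m ∈ σ, e ≤ m)
    (horient : ∀ d : α, d ∈ O ∨ i d ∈ O)
    (hED : ∀ b ∈ σ, b ∉ D)
    (x y : α) (hx : x ∈ σ) (hy : y ∈ σ) (hxy : x ≠ y)
    (hPy : Dplus i D y = ∅)
    (d : α) (hdx : d ∈ Dminus i D x) (hdy : d ∉ Dminus i D y) : False := by
  obtain ⟨hdD, hdix, hdnix, hdnx⟩ := dplus_dest (hdx : d ∈ Dplus i D (i x))
  rw [hinv] at hdnx
  have hxid : x ≤ i d := by
    have := hrev d (i x) hdix; rwa [hinv] at this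
  have hdny : d ≠ y := fun h => hED y hy (h ▸ hdD)
  have hdniy : d ≠ i y := by
    intro h
    have hxy2 : x ≤ y := by
      rw [h] at hdix
      have := hrev (i y) (i x) hdix
      rwa [hinv, hinv] at this
    have hxiy : x ≤ i y := hstar x hx y hy hxy
    have hxniy : x ≠ i y := fun h2 => hED x hx (by rw [h2, ← h]; exact hdD)
    exact hnotriv x ⟨y, hxy2, hxiy, hxy, hxniy⟩
  have hndiy : ¬ d ≤ i y := by
    intro hle
    exact hdy (dplus_mem hdD hle hdniy (by rw [hinv]; exact hdny))
  have hxtriv : x ≤ d → False := by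
    intro hxd
    refine hnotriv x ⟨d, hxd, hxid, fun h => hED x hx (h ▸ hdD), fun h => hdnix ?_⟩
    rw [h, hinv]
  have hcontraPy : d ≤ y → False := by
    intro hdy2
    have : d ∈ Dplus i D y := dplus_mem hdD hdy2 hdny hdniy
    rw [hPy] at this
    exact this
  rcases hnested d y with h | h | h | h
  · exact hcontraPy h
  · exact hndiy h
  · have hidix : i d ≤ i x := le_trans h (hstar y hy x hx (Ne.symm hxy))
    have hxd : x ≤ d := by
      have := hrev (i d) (i x) hidix; rwa [hinv, hinv] at this
    exact hxtriv hxd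
  · rcases horient d with hdO | hidO
    · obtain ⟨m, hmσ, hdm⟩ := hsplit d hdO
      by_cases hmy : m = y
      · exact hcontraPy (hmy ▸ hdm)
      · exact hndiy (le_trans hdm (hstar m hmσ y hy hmy))
    · obtain ⟨m, hmσ, hidm⟩ := hsplit (i d) hidO
      by_cases hmx : m = x
      · rw [hmx] at hidm
        have : x = i d := le_antisymm hxid hidm
        exact hdnix (by rw [this, hinv])
      · have hidix : i d ≤ i x := le_trans hidm (hstar m hmσ x hx hmx)
        have hxd : x ≤ d := by
          have := hrev (i d) (i x) hidix; rwa [hinv, hinv] at this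
        exact hxtriv hxd

private lemma caseK_aux {α : Type*} [PartialOrder α] (i : α → α)
    (hinv : ∀ s, i (i s) = s)
    (D σ : Set α)
    (hstar : ∀ a ∈ σ, ∀ b ∈ σ, a ≠ b → a ≤ i b)
    (hED : ∀ b ∈ σ, b ∉ D)
    (x y : α) (hx : x ∈ σ) (hy : y ∈ σ) (hxy : x ≠ y)
    (hMy : Dminus i D y = ∅) : Dplus i D x = ∅ := by
  rw [Set.eq_empty_iff_forall_notMem]
  intro d hd
  obtain ⟨hdD, hdx, hdnx, hdnix⟩ := dplus_dest hd
  have hxiy : x ≤ i y := hstar x hx y hy hxy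
  have hdny : d ≠ y := fun h => hED y hy (h ▸ hdD)
  have hdniy : d ≠ i y := by
    intro h
    have h1 : i y ≤ x := h ▸ hdx
    have h2 : x = i y := le_antisymm hxiy h1
    exact hED x hx (by rw [h2, ← h]; exact hdD)
  have : d ∈ Dminus i D y :=
    dplus_mem hdD (le_trans hdx hxiy) hdniy (by rw [hinv]; exact hdny)
  rw [hMy] at this
  exact this

/-- a splitting star meeting at least three `D`-equivalence
classes meets `D`. -/
theorem stmt_16 {α : Type*} [PartialOrder α] (i : α → α)
    (hi : IsInvolution i) (htree : IsTreeSet i)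
    (hcc : SepChainComplete α)
    (D : Set α) (hD : IsSelection i D) (hbc : BranchClosed i D)
    (σ : Set α) (hσ : IsSplittingStar i σ)
    (r s t : α) (hr : r ∈ σ) (hs : s ∈ σ) (ht : t ∈ σ)
    (hrs : ¬ DEquiv i D r s) (hrt : ¬ DEquiv i D r t) (hst : ¬ DEquiv i D s t) :
    (σ ∩ D).Nonempty := by
  by_contra hne
  have hED : ∀ b ∈ σ, b ∉ D := fun b hb hbD => hne ⟨b, hb, hbD⟩
  obtain ⟨hinv, hrev⟩ := hi
  obtain ⟨hnested, hnotriv, hndeg⟩ := htree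
  obtain ⟨O, hOor, hOcons, hOsp, hσO⟩ := id hσ
  have hmemσ : ∀ a, a ∈ σ ↔ MaximalIn O a := fun a => by rw [hσO]; exact Iff.rfl
  have hstar : ∀ a ∈ σ, ∀ b ∈ σ, a ≠ b → a ≤ i b := by
    intro a ha b hb hab
    obtain ⟨haO, hamax⟩ := (hmemσ a).mp ha
    obtain ⟨hbO, hbmax⟩ := (hmemσ b).mp hb
    have haib : a ≠ i b := fun h => ((hOor b).mp hbO) (h ▸ haO)
    rcases hnested a b with h | h | h | h
    · exact absurd (hamax b hbO h) hab
    · exact h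
    · exact absurd h (hOcons a haO b hbO hab haib)
    · have hba : b ≤ a := by
        have := hrev (i a) (i b) h; rwa [hinv, hinv] at this
      exact absurd (hbmax a haO hba).symm hab
  have hsplit' : ∀ e ∈ O, ∃ m ∈ σ, e ≤ m := by
    intro e he
    obtain ⟨m, hm, hle⟩ := hOsp e he
    exact ⟨m, (hmemσ m).mpr hm, hle⟩
  have horient : ∀ d : α, d ∈ O ∨ i d ∈ O := by
    intro d
    by_cases h : d ∈ O
    · exact Or.inl h
    · exact Or.inr (by by_contra h2; exact h ((hOor d).mpr h2))
  -- pairwise distinctness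
  have hrs' : r ≠ s := fun h => hrs (by rw [h]; exact ⟨rfl, rfl⟩)
  have hrt' : r ≠ t := fun h => hrt (by rw [h]; exact ⟨rfl, rfl⟩)
  have hst' : s ≠ t := fun h => hst (by rw [h]; exact ⟨rfl, rfl⟩)
  -- every element of {r,s,t} has Dplus or Dminus empty
  have hbr : ∀ b ∈ σ, (∃ u ∈ σ, ∃ v ∈ σ, u ≠ v ∧ u ≠ b ∧ v ≠ b) →
      Dplus i D b = ∅ ∨ Dminus i D b = ∅ := by
    intro b hb hother
    by_contra h
    push_neg at h
    obtain ⟨h1, h2⟩ := h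
    obtain ⟨d₁, hd₁⟩ := h1
    obtain ⟨d₂, hd₂⟩ := h2
    obtain ⟨hd₁D, hd₁b, -, -⟩ := dplus_dest hd₁
    obtain ⟨hd₂D, hd₂ib, -, -⟩ := dplus_dest (hd₂ : d₂ ∈ Dplus i D (i b))
    have hbid₂ : b ≤ i d₂ := by
      have := hrev d₂ (i b) hd₂ib; rwa [hinv] at this
    have hbp : IsBranchingPoint i b := ⟨σ, hσ, hb, hother⟩
    exact hED b hb (hbc b hbp ⟨d₁, hd₁D, d₂, hd₂D, hd₁b, hbid₂⟩)
  have hpairP : ∀ x ∈ σ, ∀ y ∈ σ, x ≠ y → ¬ DEquiv i D x y →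
      Dplus i D x = ∅ → Dplus i D y = ∅ → False := by
    intro x hx y hy hxy hneq hPx hPy
    have hMne : Dminus i D x ≠ Dminus i D y := fun h => hneq ⟨hPx.trans hPy.symm, h⟩
    have hsub : ¬ Dminus i D x ⊆ Dminus i D y ∨ ¬ Dminus i D y ⊆ Dminus i D x := by
      by_contra h
      push_neg at h
      exact hMne (Set.Subset.antisymm h.1 h.2)
    rcases hsub with h | h
    · obtain ⟨d, hd1, hd2⟩ := Set.not_subset.mp h
      exact caseI_aux i hinv hrev hnested hnotriv D σ O hstar hsplit' horient hED
        x y hx hy hxy hPy d hd1 hd2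
    · obtain ⟨d, hd1, hd2⟩ := Set.not_subset.mp h
      exact caseI_aux i hinv hrev hnested hnotriv D σ O hstar hsplit' horient hED
        y x hy hx (Ne.symm hxy) hPx d hd1 hd2
  have hpairM : ∀ x ∈ σ, ∀ y ∈ σ, x ≠ y → ¬ DEquiv i D x y →
      Dminus i D x = ∅ → Dminus i D y = ∅ → False := by
    intro x hx y hy hxy hneq hMx hMy
    have hPx : Dplus i D x = ∅ := caseK_aux i hinv D σ hstar hED x y hx hy hxy hMy
    have hPy : Dplus i D y = ∅ := caseK_aux i hinv D σ hstar hED y x hy hx (Ne.symm hxy) hMx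
    exact hneq ⟨hPx.trans hPy.symm, hMx.trans hMy.symm⟩
  have hR := hbr r hr ⟨s, hs, t, ht, hst', Ne.symm hrs', Ne.symm hrt'⟩
  have hS := hbr s hs ⟨r, hr, t, ht, hrt', hrs', Ne.symm hst'⟩
  have hT := hbr t ht ⟨r, hr, s, hs, hrs', hrt', hst'⟩
  rcases hR with hR | hR <;> rcases hS with hS | hS <;> rcases hT with hT | hT
  · exact hpairP r hr s hs hrs' hrs hR hS
  · exact hpairP r hr s hs hrs' hrs hR hS
  · exact hpairP r hr t ht hrt' hrt hR hT
  · exact hpairM s hs t ht hst' hst hS hT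
  · exact hpairP s hs t ht hst' hst hS hT
  · exact hpairM r hr t ht hrt' hrt hR hT
  · exact hpairM r hr s hs hrs' hrs hR hS
  · exact hpairM r hr s hs hrs' hrs hR hS
end
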